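/- Let σ ∈ 𝕋ⁿₘ and f ∈ I be such that f is S-irreducible with respect to σ and there exists u ∈ Pᵐ \ {0} with v(u) = f and LT(u) = σ. Then exactly one of the following holds: (a) f = 0 and σ ∈ LT(Syz F); or (b) f ≠ 0, σ ∈ NS(Syz F), and σ = S(f) = φ(LT(f)). -/

import Mathlib

open MvPolynomial

namespace F5

noncomputable section
open scoped Classical

/-- Monomials (power products) in `n` variables, represented by exponent vectors. -/
abbrev Mon (n : ℕ) : Type := Fin n →₀ ℕ

/-- Module terms `t·eₗ` of the free module `Pᵐ`. -/
abbrev MTerm (n m : ℕ) : Type := (Fin n →₀ ℕ) × Fin m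

/-- Action of a monomial on a module term: `u • (t eₗ) = (u t) eₗ`. -/
def mact {n m : ℕ} (u : Mon n) (σ : MTerm n m) : MTerm n m := (u + σ.1, σ.2)

/-- An admissible order on monomials: a linear order with `1 ≤ t` and
compatibility with multiplication. -/
structure AdmissibleOrder (n : ℕ) where
  ord : LinearOrder (Mon n)
  one_le : ∀ t : Mon n, ord.le 0 t
  mul_lt_mul : ∀ s t u : Mon n, ord.lt s t → ord.lt (u + s) (u + t)

/-- An admissible module order on module terms: a linear well-order compatible
with the monomial action, and such that `σ ≤ u σ`. -/
structure ModuleOrder (n m : ℕ) where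
  ord : LinearOrder (MTerm n m)
  wf : WellFounded ord.lt
  mul_lt_mul : ∀ (σ τ : MTerm n m) (u : Mon n), ord.lt σ τ → ord.lt (mact u σ) (mact u τ)
  le_mul : ∀ (σ : MTerm n m) (u : Mon n), ord.le σ (mact u σ)

variable {k : Type*} [Field k] {n m : ℕ}

/-- The leading monomial of a polynomial with respect to `μ` (junk value `0` for `f = 0`). -/
noncomputable def pLT (μ : AdmissibleOrder n) (f : MvPolynomial (Fin n) k) : Mon n :=
  if h : f.support.Nonempty then @Finset.max' _ μ.ord f.support h else 0

/-- The leading coefficient of a polynomial with respect to `μ`. -/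
noncomputable def pLC (μ : AdmissibleOrder n) (f : MvPolynomial (Fin n) k) : k :=
  f.coeff (pLT μ f)

/-- The set (finset) of module terms occurring in an element of `Pᵐ`. -/
noncomputable def msupport (u : Fin m → MvPolynomial (Fin n) k) : Finset (MTerm n m) :=
  letI := Classical.decEq (MTerm n m)
  Finset.univ.biUnion fun l => (u l).support.image fun t => (t, l)

/-- A junk default module term (needs `m ≠ 0`). -/
def mdefault [NeZero m] : MTerm n m := (0, ⟨0, Nat.pos_of_ne_zero (NeZero.ne m)⟩)

/-- The leading module term of a nonzero element of `Pᵐ` with respect to `μ'`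
(junk value for `0`). -/
noncomputable def mLT [NeZero m] (μ' : ModuleOrder n m) (u : Fin m → MvPolynomial (Fin n) k) :
    MTerm n m :=
  if h : (msupport u).Nonempty then @Finset.max' _ μ'.ord _ h else mdefault

/-- The map `v : Pᵐ → P`, `v(eᵢ) = fᵢ`. -/
noncomputable def vmap (F : Fin m → MvPolynomial (Fin n) k)
    (u : Fin m → MvPolynomial (Fin n) k) : MvPolynomial (Fin n) k :=
  ∑ i, u i * F i

/-- The ideal `I = (f₁, …, fₘ)`. -/
noncomputable def idealI (F : Fin m → MvPolynomial (Fin n) k) : Ideal (MvPolynomial (Fin n) k) :=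
  Ideal.span (Set.range F)

/-- `LT(Syz F)`: leading module terms of nonzero syzygies of `F`. -/
def LTSyz [NeZero m] (μ' : ModuleOrder n m) (F : Fin m → MvPolynomial (Fin n) k) :
    Set (MTerm n m) :=
  {σ | ∃ s : Fin m → MvPolynomial (Fin n) k, s ≠ 0 ∧ vmap F s = 0 ∧ mLT μ' s = σ}

/-- The signature `S(f)`: the `μ'`-minimum of `{LT(u) : v(u) = f}` (junk for `f = 0` or
`f ∉ I`). -/
noncomputable def sig [NeZero m] (μ' : ModuleOrder n m) (F : Fin m → MvPolynomial (Fin n) k)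
    (f : MvPolynomial (Fin n) k) : MTerm n m :=
  if hne : {σ : MTerm n m |
      ∃ u : Fin m → MvPolynomial (Fin n) k, u ≠ 0 ∧ vmap F u = f ∧ mLT μ' u = σ}.Nonempty
  then μ'.wf.min _ hne else mdefault

/-- `f` S-reduces to `g` with `h`, with respect to `σ`. -/
noncomputable def SReduces [NeZero m] (μ : AdmissibleOrder n) (μ' : ModuleOrder n m)
    (F : Fin m → MvPolynomial (Fin n) k)
    (f h g : MvPolynomial (Fin n) k) (σ : MTerm n m) : Prop :=
  ∃ (t : Mon n) (α : k), α ≠ 0 ∧ g = f - (monomial t α) * h ∧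
    (g = 0 ∨ μ.ord.lt (pLT μ g) (pLT μ f)) ∧
    μ'.ord.lt (sig μ' F ((monomial t (1 : k)) * h)) σ

/-- `f` is S-irreducible with respect to `σ`. -/
noncomputable def SIrr [NeZero m] (μ : AdmissibleOrder n) (μ' : ModuleOrder n m)
    (F : Fin m → MvPolynomial (Fin n) k) (f : MvPolynomial (Fin n) k) (σ : MTerm n m) : Prop :=
  f = 0 ∨ ¬ ∃ h : MvPolynomial (Fin n) k, h ∈ idealI F ∧ h ≠ 0 ∧
    ∃ g : MvPolynomial (Fin n) k, SReduces μ μ' F f h g σ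

/-- `G` is an S-Gröbner basis (of `I` w.r.t. `μ`, `F`, `μ'`). -/
noncomputable def IsSGB [NeZero m] (μ : AdmissibleOrder n) (μ' : ModuleOrder n m)
    (F : Fin m → MvPolynomial (Fin n) k) (G : Set (MvPolynomial (Fin n) k)) : Prop :=
  (∀ g ∈ G, g ∈ idealI F ∧ g ≠ 0) ∧
  ∀ f : MvPolynomial (Fin n) k, f ∈ idealI F → f ≠ 0 → SIrr μ μ' F f (sig μ' F f) →
    ∃ g ∈ G, ∃ t : Mon n,
      pLT μ ((monomial t (1 : k)) * g) = pLT μ f ∧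
      sig μ' F ((monomial t (1 : k)) * g) = sig μ' F f

/-- `LT(I)`: the set of leading monomials of nonzero elements of `I`. -/
def LTIdeal (μ : AdmissibleOrder n) (F : Fin m → MvPolynomial (Fin n) k) : Set (Mon n) :=
  {t | ∃ f : MvPolynomial (Fin n) k, f ∈ idealI F ∧ f ≠ 0 ∧ pLT μ f = t}

/-- `φ(t)`: the `μ'`-minimum signature of nonzero elements of `I` with leading monomial `t`. -/
noncomputable def phi [NeZero m] (μ : AdmissibleOrder n) (μ' : ModuleOrder n m)
    (F : Fin m → MvPolynomial (Fin n) k) (t : Mon n) : MTerm n m :=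
  if hne : {σ : MTerm n m | ∃ f : MvPolynomial (Fin n) k,
      f ∈ idealI F ∧ f ≠ 0 ∧ pLT μ f = t ∧ sig μ' F f = σ}.Nonempty
  then μ'.wf.min _ hne else mdefault

/-- `f` is a primitive S-irreducible polynomial. -/
noncomputable def PrimSIrr [NeZero m] (μ : AdmissibleOrder n) (μ' : ModuleOrder n m)
    (F : Fin m → MvPolynomial (Fin n) k) (f : MvPolynomial (Fin n) k) : Prop :=
  f ∈ idealI F ∧ f ≠ 0 ∧ SIrr μ μ' F f (sig μ' F f) ∧
  ¬ ∃ (f' : MvPolynomial (Fin n) k) (t : Mon n),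
      f' ∈ idealI F ∧ f' ≠ 0 ∧ t ≠ 0 ∧ SIrr μ μ' F f' (sig μ' F f') ∧
      pLT μ ((monomial t (1 : k)) * f') = pLT μ f ∧
      sig μ' F ((monomial t (1 : k)) * f') = sig μ' F f

/-- The lcm of two monomials (pointwise maximum of exponents). -/
def lcmMon {n : ℕ} (s t : Mon n) : Mon n := t + (s - t)

/-- The term `u₁ = lcm(LT g₁, LT g₂)/(LC g₁ · LT g₁)` (when the first argument is `g₁`). -/
noncomputable def uterm (μ : AdmissibleOrder n) (g₁ g₂ : MvPolynomial (Fin n) k) :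
    MvPolynomial (Fin n) k :=
  monomial (lcmMon (pLT μ g₁) (pLT μ g₂) - pLT μ g₁) (pLC μ g₁)⁻¹

/-- The S-polynomial of `g₁` and `g₂`. -/
noncomputable def Spol (μ : AdmissibleOrder n) (g₁ g₂ : MvPolynomial (Fin n) k) :
    MvPolynomial (Fin n) k :=
  uterm μ g₁ g₂ * g₁ - uterm μ g₂ g₁ * g₂

/-- `(g₁, g₂)` is a normal pair. -/
noncomputable def NormalPair [NeZero m] (μ : AdmissibleOrder n) (μ' : ModuleOrder n m)
    (F : Fin m → MvPolynomial (Fin n) k) (g₁ g₂ : MvPolynomial (Fin n) k) : Prop :=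
  PrimSIrr μ μ' F g₁ ∧ PrimSIrr μ μ' F g₂ ∧
  sig μ' F (uterm μ g₁ g₂ * g₁) =
    mact (lcmMon (pLT μ g₁) (pLT μ g₂) - pLT μ g₁) (sig μ' F g₁) ∧
  sig μ' F (uterm μ g₂ g₁ * g₂) =
    mact (lcmMon (pLT μ g₂) (pLT μ g₁) - pLT μ g₂) (sig μ' F g₂) ∧
  sig μ' F (uterm μ g₁ g₂ * g₁) ≠ sig μ' F (uterm μ g₂ g₁ * g₂)


end
end F5

open F5 MvPolynomial

/-! Since `u` represents `f` with `LT(u) = σ`, we have `S(f) ≤ σ`. If `S(f) < σ`,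
then `f` S-reduces to `0` with itself; if `φ(LT f) < S(f)`, then `f` S-reduces with a polynomial of
the same leading monomial and signature `φ(LT f)`. Finally a syzygy `s` with `LT(s) = σ` would
cancel the leading term of `u` without changing `v(u) = f`, giving `S(f) < σ` again. -/

namespace F5

variable {k : Type*} [Field k] {n m : ℕ}

section LeadingMonomial

variable (μ : AdmissibleOrder n) {f g : MvPolynomial (Fin n) k}

theorem pLT_mem_support (hf : f ≠ 0) : pLT μ f ∈ f.support := by
  rw [pLT, dif_pos (support_nonempty.2 hf)]
  exact @Finset.max'_mem _ μ.ord _ _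

theorem le_pLT {t : Mon n} (ht : t ∈ f.support) : μ.ord.le t (pLT μ f) := by
  rw [pLT, dif_pos ⟨t, ht⟩]
  exact @Finset.le_max' _ μ.ord _ _ ht

theorem pLC_ne_zero (hf : f ≠ 0) : pLC μ f ≠ 0 :=
  mem_support_iff.1 (pLT_mem_support μ hf)

theorem pLT_lt_of_coeff_eq_zero {a : Mon n} (hf : f ≠ 0)
    (hle : ∀ t ∈ f.support, μ.ord.le t a) (ha : f.coeff a = 0) : μ.ord.lt (pLT μ f) a := by
  have hmem := pLT_mem_support μ hf
  exact @lt_of_le_of_ne _ μ.ord.toPartialOrder _ _ (hle _ hmem)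
    fun h => mem_support_iff.1 hmem (by rwa [h])

theorem sub_C_mul_eq_zero_or_pLT_lt (hg : g ≠ 0) (h : pLT μ g = pLT μ f) :
    f - C (pLC μ f / pLC μ g) * g = 0 ∨
      μ.ord.lt (pLT μ (f - C (pLC μ f / pLC μ g) * g)) (pLT μ f) := by
  refine or_iff_not_imp_left.2 fun hne => pLT_lt_of_coeff_eq_zero μ hne (fun t ht => ?_) ?_
  · rw [mem_support_iff, coeff_sub, coeff_C_mul] at ht
    by_cases htf : f.coeff t = 0
    · have htg : g.coeff t ≠ 0 := fun htg => ht (by rw [htf, htg, mul_zero, sub_zero])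
      exact h ▸ le_pLT μ (mem_support_iff.2 htg)
    · exact le_pLT μ (mem_support_iff.2 htf)
  · have hg' : g.coeff (pLT μ f) = pLC μ g := by rw [← h]; rfl
    rw [coeff_sub, coeff_C_mul, hg']
    exact sub_eq_zero.2 (div_mul_cancel₀ _ (pLC_ne_zero μ hg)).symm

end LeadingMonomial

def mcoeff (u : Fin m → MvPolynomial (Fin n) k) (τ : MTerm n m) : k := (u τ.2).coeff τ.1

section LeadingModuleTerm

variable {u s : Fin m → MvPolynomial (Fin n) k}

theorem mem_msupport_iff {τ : MTerm n m} : τ ∈ msupport u ↔ mcoeff u τ ≠ 0 := by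
  simp only [msupport, mcoeff, Finset.mem_biUnion, Finset.mem_univ, Finset.mem_image,
    mem_support_iff, true_and]
  exact ⟨fun ⟨_, _, h, hτ⟩ => hτ ▸ h, fun h => ⟨τ.2, τ.1, h, rfl⟩⟩

theorem mcoeff_sub_smul (c : k) (τ : MTerm n m) :
    mcoeff (u - c • s) τ = mcoeff u τ - c * mcoeff s τ := by
  simp [mcoeff, coeff_smul]

theorem msupport_nonempty (hu : u ≠ 0) : (msupport u).Nonempty := by
  obtain ⟨l, hl⟩ := Function.ne_iff.1 hu
  obtain ⟨t, ht⟩ := support_nonempty.2 hl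
  exact ⟨(t, l), mem_msupport_iff.2 (mem_support_iff.1 ht)⟩

variable [NeZero m] (μ' : ModuleOrder n m)

theorem mLT_mem_msupport (hu : u ≠ 0) : mLT μ' u ∈ msupport u := by
  rw [mLT, dif_pos (msupport_nonempty hu)]
  exact @Finset.max'_mem _ μ'.ord _ _

theorem le_mLT {τ : MTerm n m} (hτ : τ ∈ msupport u) : μ'.ord.le τ (mLT μ' u) := by
  rw [mLT, dif_pos ⟨τ, hτ⟩]
  exact @Finset.le_max' _ μ'.ord _ _ hτ

theorem mLT_lt_of_mcoeff_eq_zero {σ : MTerm n m} (hu : u ≠ 0)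
    (hle : ∀ τ ∈ msupport u, μ'.ord.le τ σ) (hσ : mcoeff u σ = 0) : μ'.ord.lt (mLT μ' u) σ := by
  have hmem := mLT_mem_msupport μ' hu
  exact @lt_of_le_of_ne _ μ'.ord.toPartialOrder _ _ (hle _ hmem)
    fun h => mem_msupport_iff.1 hmem (by rwa [h])

theorem mLT_sub_smul_lt (hs : s ≠ 0) (h : mLT μ' s = mLT μ' u)
    (hne : u - (mcoeff u (mLT μ' u) / mcoeff s (mLT μ' u)) • s ≠ 0) :
    μ'.ord.lt (mLT μ' (u - (mcoeff u (mLT μ' u) / mcoeff s (mLT μ' u)) • s)) (mLT μ' u) := by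
  have hs' : mcoeff s (mLT μ' u) ≠ 0 := mem_msupport_iff.1 (h ▸ mLT_mem_msupport μ' hs)
  refine mLT_lt_of_mcoeff_eq_zero μ' hne (fun τ hτ => ?_) ?_
  · rw [mem_msupport_iff, mcoeff_sub_smul] at hτ
    by_cases hτu : mcoeff u τ = 0
    · have hτs : mcoeff s τ ≠ 0 := fun hτs => hτ (by rw [hτu, hτs, mul_zero, sub_zero])
      exact h ▸ le_mLT μ' (mem_msupport_iff.2 hτs)
    · exact le_mLT μ' (mem_msupport_iff.2 hτu)
  · rw [mcoeff_sub_smul, div_mul_cancel₀ _ hs', sub_self]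

end LeadingModuleTerm

section Vmap

variable (F : Fin m → MvPolynomial (Fin n) k)

theorem vmap_zero : vmap F 0 = 0 := by
  simp [vmap]

theorem vmap_sub_smul (u s : Fin m → MvPolynomial (Fin n) k) (c : k) :
    vmap F (u - c • s) = vmap F u - c • vmap F s := by
  simp [vmap, sub_mul, Finset.sum_sub_distrib, Finset.smul_sum]

end Vmap

section Signature

variable [NeZero m] (μ : AdmissibleOrder n) (μ' : ModuleOrder n m)
  (F : Fin m → MvPolynomial (Fin n) k) {f : MvPolynomial (Fin n) k}

theorem sig_le_mLT {u : Fin m → MvPolynomial (Fin n) k} (hu : u ≠ 0) :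
    μ'.ord.le (sig μ' F (vmap F u)) (mLT μ' u) := by
  have hne : {σ : MTerm n m | ∃ w : Fin m → MvPolynomial (Fin n) k,
      w ≠ 0 ∧ vmap F w = vmap F u ∧ mLT μ' w = σ}.Nonempty := ⟨_, u, hu, rfl, rfl⟩
  rw [sig, dif_pos hne]
  exact (@not_lt _ μ'.ord _ _).1 (μ'.wf.not_lt_min _ (by exact ⟨u, hu, rfl, rfl⟩))

theorem phi_le_sig (hf : f ∈ idealI F) (hf0 : f ≠ 0) :
    μ'.ord.le (phi μ μ' F (pLT μ f)) (sig μ' F f) := by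
  have hne : {σ : MTerm n m | ∃ g : MvPolynomial (Fin n) k,
      g ∈ idealI F ∧ g ≠ 0 ∧ pLT μ g = pLT μ f ∧ sig μ' F g = σ}.Nonempty :=
    ⟨_, f, hf, hf0, rfl, rfl⟩
  rw [phi, dif_pos hne]
  exact (@not_lt _ μ'.ord _ _).1 (μ'.wf.not_lt_min _ (by exact ⟨f, hf, hf0, rfl, rfl⟩))

theorem exists_sig_eq_phi (hf : f ∈ idealI F) (hf0 : f ≠ 0) :
    ∃ g ∈ idealI F, g ≠ 0 ∧ pLT μ g = pLT μ f ∧ sig μ' F g = phi μ μ' F (pLT μ f) := by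
  have hne : {σ : MTerm n m | ∃ g : MvPolynomial (Fin n) k,
      g ∈ idealI F ∧ g ≠ 0 ∧ pLT μ g = pLT μ f ∧ sig μ' F g = σ}.Nonempty :=
    ⟨_, f, hf, hf0, rfl, rfl⟩
  rw [phi, dif_pos hne]
  exact μ'.wf.min_mem _ hne

theorem sig_lt_of_mLT_mem_LTSyz {u : Fin m → MvPolynomial (Fin n) k}
    (hf0 : vmap F u ≠ 0) (hsyz : mLT μ' u ∈ LTSyz μ' F) :
    μ'.ord.lt (sig μ' F (vmap F u)) (mLT μ' u) := by
  obtain ⟨s, hs0, hvs, hsu⟩ := hsyz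
  set w := u - (mcoeff u (mLT μ' u) / mcoeff s (mLT μ' u)) • s
  have hvw : vmap F w = vmap F u := by rw [vmap_sub_smul, hvs, smul_zero, sub_zero]
  have hw0 : w ≠ 0 := fun hw => hf0 (by rw [← hvw, hw, vmap_zero])
  rw [← hvw]
  exact @lt_of_le_of_lt _ μ'.ord.toPreorder _ _ _ (sig_le_mLT μ' F hw0)
    (mLT_sub_smul_lt μ' hs0 hsu hw0)

end Signature

namespace SIrr

variable [NeZero m] {μ : AdmissibleOrder n} {μ' : ModuleOrder n m}
  {F : Fin m → MvPolynomial (Fin n) k} {f : MvPolynomial (Fin n) k} {σ : MTerm n m}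

theorem not_sReduces (hirr : SIrr μ μ' F f σ) (hf0 : f ≠ 0) {h g : MvPolynomial (Fin n) k}
    (hh : h ∈ idealI F) (hh0 : h ≠ 0) : ¬ SReduces μ μ' F f h g σ :=
  fun hred => hirr.resolve_left hf0 ⟨h, hh, hh0, g, hred⟩

theorem not_sig_lt (hirr : SIrr μ μ' F f σ) (hf : f ∈ idealI F) (hf0 : f ≠ 0) :
    ¬ μ'.ord.lt (sig μ' F f) σ := fun hlt =>
  hirr.not_sReduces hf0 hf hf0 (g := 0) ⟨0, 1, one_ne_zero, by simp, Or.inl rfl, by simpa⟩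

theorem not_phi_lt (hirr : SIrr μ μ' F f σ) (hf : f ∈ idealI F) (hf0 : f ≠ 0) :
    ¬ μ'.ord.lt (phi μ μ' F (pLT μ f)) σ := fun hlt => by
  obtain ⟨g, hg, hg0, hgf, hsig⟩ := exists_sig_eq_phi μ μ' F hf hf0
  refine hirr.not_sReduces hf0 hg hg0 ⟨0, pLC μ f / pLC μ g,
    div_ne_zero (pLC_ne_zero μ hf0) (pLC_ne_zero μ hg0), by rw [monomial_zero'],
    sub_C_mul_eq_zero_or_pLT_lt μ hg0 hgf, ?_⟩
  rwa [monomial_zero', C_1, one_mul, hsig]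

end SIrr

end F5

/-- S-reduction theorem: if `f ∈ I` is S-irreducible with respect to `σ` and
`f = v(u)` for some `u ≠ 0` with `LT(u) = σ`, then exactly one of the following holds:
(a) `f = 0` and `σ ∈ LT(Syz F)`; (b) `f ≠ 0`, `σ ∈ NS(Syz F)`, and `σ = S(f) = φ(LT(f))`. -/
theorem stmt_7 {k : Type*} [Field k] {n m : ℕ} [NeZero m]
    (μ : AdmissibleOrder n) (μ' : ModuleOrder n m)
    (F : Fin m → MvPolynomial (Fin n) k)
    (σ : MTerm n m) (f : MvPolynomial (Fin n) k)
    (hfI : f ∈ idealI F)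
    (hirr : SIrr μ μ' F f σ)
    (hu : ∃ u : Fin m → MvPolynomial (Fin n) k, u ≠ 0 ∧ vmap F u = f ∧ mLT μ' u = σ) :
    Xor' (f = 0 ∧ σ ∈ LTSyz μ' F)
      (f ≠ 0 ∧ σ ∉ LTSyz μ' F ∧ σ = sig μ' F f ∧ sig μ' F f = phi μ μ' F (pLT μ f)) := by
  obtain ⟨u, hu0, rfl, rfl⟩ := hu
  by_cases hf0 : vmap F u = 0
  · exact Or.inl ⟨⟨hf0, u, hu0, hf0, rfl⟩, fun h => h.1 hf0⟩
  have hsig : mLT μ' u = sig μ' F (vmap F u) := @le_antisymm _ μ'.ord.toPartialOrder _ _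
    ((@not_lt _ μ'.ord _ _).1 (hirr.not_sig_lt hfI hf0)) (sig_le_mLT μ' F hu0)
  have hphi : sig μ' F (vmap F u) = phi μ μ' F (pLT μ (vmap F u)) :=
    @le_antisymm _ μ'.ord.toPartialOrder _ _
      (hsig ▸ (@not_lt _ μ'.ord _ _).1 (hirr.not_phi_lt hfI hf0)) (phi_le_sig μ μ' F hfI hf0)
  have hns : mLT μ' u ∉ LTSyz μ' F := fun hsyz =>
    hirr.not_sig_lt hfI hf0 (sig_lt_of_mLT_mem_LTSyz μ' F hf0 hsyz)
  exact Or.inr ⟨⟨hf0, hns, hsig, hphi⟩, fun h => hf0 h.1⟩
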